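/- The point P = (60, 450) on the curve y² = x³ − 13500 has integral multiples [2]P, [3]P, and [4]P; that is, [2]P, [3]P, [4]P all have integer coordinates. -/

import Mathlib

/-- The Mordell curve `y² = x³ + B` as a Weierstrass curve over `ℚ`. -/
def Mordell (B : ℚ) : WeierstrassCurve.Affine ℚ :=
  { a₁ := 0, a₂ := 0, a₃ := 0, a₄ := 0, a₆ := B }

/-- `B` is sixth-power-free: no sixth power of a prime divides it. -/
def SixthPowerFree (B : ℤ) : Prop := ∀ p : ℕ, p.Prime → ¬ ((p : ℤ) ^ 6 ∣ B)

/-- A rational point on the Mordell curve is integral if it is affine with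
integer coordinates. -/
def IsIntegralPoint {B : ℚ} (P : (Mordell B).Point) : Prop :=
  ∃ (x y : ℚ) (h : (Mordell B).Nonsingular x y),
    P = WeierstrassCurve.Affine.Point.some _ _ h ∧ x.den = 1 ∧ y.den = 1

/-! Chord and tangent: for `P = (60, 450)` the tangent slope is `12`, giving
`[2]P = (24, -18)`; the chord through `[2]P` and `P` has slope `13`, giving
`[3]P = (85, -775)`; the tangent at `[2]P` has slope `-48`, giving
`[4]P = (2256, 107154)`. -/

open WeierstrassCurve.Affine

namespace Mordell

variable {B x y x₁ x₂ y₁ y₂ x₃ y₃ ℓ : ℚ}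

lemma equation_iff : (Mordell B).Equation x y ↔ y ^ 2 = x ^ 3 + B := by
  simp [WeierstrassCurve.Affine.equation_iff, Mordell]

lemma Δ_eq : (Mordell B).Δ = -432 * B ^ 2 := by
  simp only [WeierstrassCurve.Δ, WeierstrassCurve.b₂, WeierstrassCurve.b₄,
    WeierstrassCurve.b₆, WeierstrassCurve.b₈, Mordell]
  ring

lemma nonsingular_of_equation (hB : B ≠ 0) (h : y ^ 2 = x ^ 3 + B) :
    (Mordell B).Nonsingular x y :=
  (equation_iff_nonsingular_of_Δ_ne_zero (by rw [Δ_eq]; positivity)).mp (equation_iff.mpr h)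

lemma negY_eq : (Mordell B).negY x y = -y := by
  simp [negY, Mordell]

lemma some_add_some_of_slope {h₁ : (Mordell B).Nonsingular x₁ y₁}
    {h₂ : (Mordell B).Nonsingular x₂ y₂} {h₃ : (Mordell B).Nonsingular x₃ y₃}
    (hxy : ¬(x₁ = x₂ ∧ y₁ = -y₂)) (hℓ : (Mordell B).slope x₁ x₂ y₁ y₂ = ℓ)
    (hx₃ : x₃ = ℓ ^ 2 - x₁ - x₂) (hy₃ : y₃ = ℓ * (x₁ - x₃) - y₁) :
    Point.some _ _ h₁ + Point.some _ _ h₂ = Point.some _ _ h₃ := by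
  rw [← negY_eq (B := B) (x := x₂)] at hxy
  rw [Point.add_some hxy]
  subst hx₃ hy₃ hℓ
  congr 1 <;> simp only [addX, addY, negAddY, negY, Mordell] <;> ring

lemma some_add_some_of_X_ne (hx : x₁ ≠ x₂) (hℓ : ℓ * (x₁ - x₂) = y₁ - y₂)
    {h₁ : (Mordell B).Nonsingular x₁ y₁} {h₂ : (Mordell B).Nonsingular x₂ y₂}
    {h₃ : (Mordell B).Nonsingular x₃ y₃}
    (hx₃ : x₃ = ℓ ^ 2 - x₁ - x₂) (hy₃ : y₃ = ℓ * (x₁ - x₃) - y₁) :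
    Point.some _ _ h₁ + Point.some _ _ h₂ = Point.some _ _ h₃ := by
  refine some_add_some_of_slope (fun h ↦ hx h.1) ?_ hx₃ hy₃
  rw [slope_of_X_ne hx, div_eq_iff (sub_ne_zero.mpr hx), hℓ]

lemma some_add_self_of_Y_ne_zero (hy : y ≠ 0) (hℓ : ℓ * (2 * y) = 3 * x ^ 2)
    {h : (Mordell B).Nonsingular x y} {h₂ : (Mordell B).Nonsingular x₂ y₂}
    (hx₂ : x₂ = ℓ ^ 2 - 2 * x) (hy₂ : y₂ = ℓ * (x - x₂) - y) :
    Point.some _ _ h + Point.some _ _ h = Point.some _ _ h₂ := by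
  have hy' : y ≠ -y := fun h ↦ hy (by linarith)
  refine some_add_some_of_slope (fun h ↦ hy' h.2) ?_ (by rw [hx₂]; ring) hy₂
  rw [slope_of_Y_ne rfl (by rwa [negY_eq]), negY_eq, div_eq_iff (sub_ne_zero.mpr hy')]
  simp only [Mordell]
  linear_combination -hℓ

end Mordell

open Mordell in
theorem stmt_16 (h : (Mordell (-13500)).Nonsingular 60 450) :
    IsIntegralPoint ((2 : ℤ) • WeierstrassCurve.Affine.Point.some _ _ h) ∧
    IsIntegralPoint ((3 : ℤ) • WeierstrassCurve.Affine.Point.some _ _ h) ∧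
    IsIntegralPoint ((4 : ℤ) • WeierstrassCurve.Affine.Point.some _ _ h) := by
  have h₂ : (Mordell (-13500)).Nonsingular 24 (-18) :=
    nonsingular_of_equation (by norm_num) (by norm_num)
  have h₃ : (Mordell (-13500)).Nonsingular 85 (-775) :=
    nonsingular_of_equation (by norm_num) (by norm_num)
  have h₄ : (Mordell (-13500)).Nonsingular 2256 107154 :=
    nonsingular_of_equation (by norm_num) (by norm_num)
  have two_P : (2 : ℤ) • Point.some _ _ h = Point.some _ _ h₂ := by
    rw [two_zsmul]
    refine some_add_self_of_Y_ne_zero (ℓ := 12) ?_ ?_ ?_ ?_ <;> norm_num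
  have three_P : (3 : ℤ) • Point.some _ _ h = Point.some _ _ h₃ := by
    rw [show (3 : ℤ) = 2 + 1 by norm_num, add_zsmul, one_zsmul, two_P]
    refine some_add_some_of_X_ne (ℓ := 13) ?_ ?_ ?_ ?_ <;> norm_num
  have four_P : (4 : ℤ) • Point.some _ _ h = Point.some _ _ h₄ := by
    rw [show (4 : ℤ) = 2 + 2 by norm_num, add_zsmul, two_P]
    refine some_add_self_of_Y_ne_zero (ℓ := -48) ?_ ?_ ?_ ?_ <;> norm_num
  exact ⟨⟨24, -18, h₂, two_P, rfl, rfl⟩, ⟨85, -775, h₃, three_P, rfl, rfl⟩,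
    ⟨2256, 107154, h₄, four_P, rfl, rfl⟩⟩
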